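/- arXiv:math/0009112 — 3 statements merged into one kernel-verified Lean document; each statement's English description precedes it below -/
import Mathlib

section
/- Let n ≥ 2 and let f be an admissible functional on triples of permutations of {1,…,n}. Let π be a permutation of {1,…,n}, let π̄ = w₀∘π be its complement, and suppose 1 ≤ j < k ≤ n are positions with π̄(j) > π̄(k); let σ be π̄ with the entries in positions j and k swapped, and suppose ℓ(σ) = ℓ(π̄) − 1. If i is an index with j ≤ i < k (the swapped positions straddle the gap between i and i+1), then f(π, s_i, σ) = 1. -/
/- Background definitions: descent-cycling for Schubert problems on S_n,
   with permutations modeled as `Equiv.Perm (Fin n)` (0-indexed positions: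
   position i here corresponds to position i+1 in 1-indexed notation). -/

namespace DC

/-- A triple of permutations of {1,…,n}. -/
abbrev Triple (n : ℕ) := Equiv.Perm (Fin n) × Equiv.Perm (Fin n) × Equiv.Perm (Fin n)

/-- The length ℓ(π) = number of inversions of π. -/
def len {n : ℕ} (π : Equiv.Perm (Fin n)) : ℕ :=
  (Finset.univ.filter (fun p : Fin n × Fin n => p.1 < p.2 ∧ π p.2 < π p.1)).card

/-- π has a descent at (0-indexed) position i, i.e. π(i) > π(i+1). -/
def Descent {n : ℕ} (π : Equiv.Perm (Fin n)) (i : ℕ) : Prop :=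
  ∃ h : i + 1 < n, π ⟨i + 1, h⟩ < π ⟨i, Nat.lt_of_succ_lt h⟩

/-- π has an ascent at (0-indexed) position i, i.e. π(i) < π(i+1). -/
def Ascent {n : ℕ} (π : Equiv.Perm (Fin n)) (i : ℕ) : Prop :=
  ∃ h : i + 1 < n, π ⟨i, Nat.lt_of_succ_lt h⟩ < π ⟨i + 1, h⟩

/-- The adjacent transposition s_i swapping (0-indexed) i and i+1. -/
def s (n i : ℕ) : Equiv.Perm (Fin n) :=
  if h : i + 1 < n then Equiv.swap ⟨i, Nat.lt_of_succ_lt h⟩ ⟨i + 1, h⟩ else 1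

/-- The longest permutation w₀ : m ↦ n+1−m (0-indexed: m ↦ n−1−m). -/
def w0 (n : ℕ) : Equiv.Perm (Fin n) := Fin.revPerm

/-- The complement π̄ = w₀ ∘ π of a permutation. -/
def compl {n : ℕ} (π : Equiv.Perm (Fin n)) : Equiv.Perm (Fin n) := w0 n * π

/-- A Schubert problem: a triple of permutations whose lengths sum to n(n−1)/2. -/
def IsSchubert {n : ℕ} (P : Triple n) : Prop :=
  len P.1 + len P.2.1 + len P.2.2 = n.choose 2

/-- A Schubert problem is dc-trivial if at some position all three permutations ascend. -/
def DCTrivial {n : ℕ} (P : Triple n) : Prop :=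
  IsSchubert P ∧ ∃ i : ℕ, Ascent P.1 i ∧ Ascent P.2.1 i ∧ Ascent P.2.2 i

/-- The three Schubert problems obtainable from (u,v,w) by adding a descent at i. -/
def MoveSet {n : ℕ} (u v w : Equiv.Perm (Fin n)) (i : ℕ) : Set (Triple n) :=
  {(u * s n i, v, w), (u, v * s n i, w), (u, v, w * s n i)}

/-- P and P′ are joined by a single descent-cycling move. -/
def DCMove {n : ℕ} (P P' : Triple n) : Prop :=
  ∃ (u v w : Equiv.Perm (Fin n)) (i : ℕ),
    len u + len v + len w + 1 = n.choose 2 ∧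
    Ascent u i ∧ Ascent v i ∧ Ascent w i ∧
    P ∈ MoveSet u v w i ∧ P' ∈ MoveSet u v w i

/-- dc-equivalence: the reflexive–transitive closure of descent-cycling moves. -/
def DCEquiv {n : ℕ} : Triple n → Triple n → Prop := Relation.ReflTransGen DCMove

/-- An admissible functional on triples of permutations: constant on dc-equivalence
classes of Schubert problems, zero on dc-trivial Schubert problems, one on (id,id,w₀). -/
def Admissible {n : ℕ} (f : Triple n → ℤ) : Prop :=
  (∀ P P' : Triple n, IsSchubert P → IsSchubert P' → DCEquiv P P' → f P = f P') ∧
  (∀ P : Triple n, DCTrivial P → f P = 0) ∧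
  f (1, 1, w0 n) = 1

end DC

/-!
Induction on `k - j`. If `k = j + 1`, then `σ = π̄ s_i` and one descent-cycling move turns
`(π, s_i, σ)` into `(π s_i, id, w₀ π s_i)`; every problem `(u, id, w₀ u)` is dc-equivalent to
`(id, id, w₀)`, by moving a descent of `u` over to `w₀ u` until `u = id`.

If `k > j + 1`, the hypothesis `ℓ(σ) = ℓ(π̄) - 1` forbids a value of `π̄` strictly between
`π̄(k)` and `π̄(j)` at a position strictly between `j` and `k` (otherwise `(j k)` factors as three
length-decreasing transpositions). Hence `π̄` and `σ` have the same descent behaviour at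
`m = j` (if `j < i`) or at `m = k - 1` (if `j = i`), so `π` and `σ` have opposite ones, and a
move at `m`, where `s_i` ascends, replaces `(π, s_i, σ)` by `(π s_m, s_i, σ s_m)`: a problem of
the same shape whose transposition `(s_m j, s_m k)` is one step shorter.
-/

namespace DC

open Equiv Finset

variable {n : ℕ}

theorem s_eq_swap {i : ℕ} (h : i + 1 < n) :
    s n i = swap ⟨i, Nat.lt_of_succ_lt h⟩ ⟨i + 1, h⟩ :=
  dif_pos h

@[simp] theorem s_mul_s (i : ℕ) : s n i * s n i = 1 := by
  unfold s; split_ifs <;> simp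

@[simp] theorem mul_s_mul_s (π : Perm (Fin n)) (i : ℕ) : π * s n i * s n i = π := by
  rw [mul_assoc, s_mul_s, mul_one]

@[simp] theorem s_apply_s_apply (i : ℕ) (x : Fin n) : s n i (s n i x) = x := by
  rw [← Perm.mul_apply, s_mul_s, Perm.one_apply]

@[simp] theorem s_inv (i : ℕ) : (s n i)⁻¹ = s n i := inv_eq_of_mul_eq_one_right (s_mul_s i)

@[simp] theorem s_apply_left {i : ℕ} (h : i + 1 < n) :
    s n i ⟨i, Nat.lt_of_succ_lt h⟩ = ⟨i + 1, h⟩ := by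
  rw [s_eq_swap h, swap_apply_left]

@[simp] theorem s_apply_right {i : ℕ} (h : i + 1 < n) :
    s n i ⟨i + 1, h⟩ = ⟨i, Nat.lt_of_succ_lt h⟩ := by
  rw [s_eq_swap h, swap_apply_right]

theorem val_s_apply {i : ℕ} (h : i + 1 < n) (x : Fin n) :
    (s n i x : ℕ) = if (x : ℕ) = i then i + 1 else if (x : ℕ) = i + 1 then i else x := by
  rw [s_eq_swap h, swap_apply_def]
  split_ifs <;> simp_all [Fin.ext_iff]

theorem swap_mul_s (j k : Fin n) (m : ℕ) :
    swap j k * s n m = s n m * swap (s n m j) (s n m k) := by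
  rw [swap_apply_apply, s_inv, ← mul_assoc, ← mul_assoc, s_mul_s, one_mul]

theorem descent_iff {π : Perm (Fin n)} {i : ℕ} (h : i + 1 < n) :
    Descent π i ↔ π ⟨i + 1, h⟩ < π ⟨i, Nat.lt_of_succ_lt h⟩ :=
  ⟨fun ⟨_, h'⟩ => h', fun h' => ⟨h, h'⟩⟩

theorem ascent_iff {π : Perm (Fin n)} {i : ℕ} (h : i + 1 < n) :
    Ascent π i ↔ π ⟨i, Nat.lt_of_succ_lt h⟩ < π ⟨i + 1, h⟩ :=
  ⟨fun ⟨_, h'⟩ => h', fun h' => ⟨h, h'⟩⟩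

theorem ascent_iff_not_descent {π : Perm (Fin n)} {i : ℕ} (h : i + 1 < n) :
    Ascent π i ↔ ¬ Descent π i := by
  rw [ascent_iff h, descent_iff h, not_lt]
  exact ⟨le_of_lt, fun hle => lt_of_le_of_ne hle (π.injective.ne (by simp))⟩

theorem ascent_or_descent {π : Perm (Fin n)} {i : ℕ} (h : i + 1 < n) :
    Ascent π i ∨ Descent π i := by
  rw [ascent_iff_not_descent h]
  exact em' _

theorem ascent_one {i : ℕ} (h : i + 1 < n) : Ascent (1 : Perm (Fin n)) i :=
  (ascent_iff h).2 (by simp [Fin.lt_def])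

theorem descent_s {i : ℕ} (h : i + 1 < n) : Descent (s n i) i := by
  rw [descent_iff h, Fin.lt_def, val_s_apply h, val_s_apply h]
  simp

theorem ascent_s_of_ne {i j : ℕ} (hi : i + 1 < n) (hj : j + 1 < n) (hij : i ≠ j) :
    Ascent (s n i) j := by
  rw [ascent_iff hj, Fin.lt_def, val_s_apply hi, val_s_apply hi]
  simp only
  split_ifs <;> omega

theorem ascent_mul_s_of_descent {π : Perm (Fin n)} {i : ℕ} (h : Descent π i) :
    Ascent (π * s n i) i := by
  obtain ⟨hi, h⟩ := h
  rw [ascent_iff hi, Perm.mul_apply, Perm.mul_apply, s_eq_swap hi, swap_apply_left,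
    swap_apply_right]
  exact h

theorem descent_mul_s_of_ascent {π : Perm (Fin n)} {i : ℕ} (h : Ascent π i) :
    Descent (π * s n i) i := by
  obtain ⟨hi, h⟩ := h
  rw [descent_iff hi, Perm.mul_apply, Perm.mul_apply, s_eq_swap hi, swap_apply_left,
    swap_apply_right]
  exact h

theorem compl_apply (π : Perm (Fin n)) (x : Fin n) : compl π x = (π x).rev := rfl

theorem compl_mul (π ρ : Perm (Fin n)) : compl (π * ρ) = compl π * ρ := (mul_assoc _ _ _).symm

theorem descent_compl_iff {π : Perm (Fin n)} {i : ℕ} : Descent (compl π) i ↔ Ascent π i :=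
  exists_congr fun _ => Fin.rev_lt_rev

theorem ascent_compl_iff {π : Perm (Fin n)} {i : ℕ} : Ascent (compl π) i ↔ Descent π i :=
  exists_congr fun _ => Fin.rev_lt_rev

@[simp] theorem len_one : len (1 : Perm (Fin n)) = 0 := by
  rw [len, card_eq_zero, filter_eq_empty_iff]
  exact fun p _ h => lt_asymm h.1 h.2

theorem len_mul_eq_card (π ρ : Perm (Fin n)) :
    len (π * ρ) =
      (univ.filter fun q : Fin n × Fin n => ρ⁻¹ q.1 < ρ⁻¹ q.2 ∧ π q.2 < π q.1).card :=
  card_equiv (ρ.prodCongr ρ) fun p => by simp only [mem_filter]; simp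

theorem s_apply_lt_s_apply_iff {i : ℕ} (h : i + 1 < n) {x y : Fin n}
    (hxy : ¬((x : ℕ) = i ∧ (y : ℕ) = i + 1))
    (hyx : ¬((y : ℕ) = i ∧ (x : ℕ) = i + 1)) :
    s n i x < s n i y ↔ x < y := by
  rw [Fin.lt_def, Fin.lt_def, val_s_apply h, val_s_apply h]
  split_ifs <;> omega

theorem len_mul_s_of_ascent {π : Perm (Fin n)} {i : ℕ} (h : Ascent π i) :
    len (π * s n i) = len π + 1 := by
  obtain ⟨hi, hπ⟩ := h
  let a : Fin n := ⟨i, Nat.lt_of_succ_lt hi⟩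
  let b : Fin n := ⟨i + 1, hi⟩
  have hsa : s n i a = b := s_apply_left hi
  have hsb : s n i b = a := s_apply_right hi
  have key : (univ.filter fun q : Fin n × Fin n => s n i q.1 < s n i q.2 ∧ π q.2 < π q.1) =
      insert (b, a) (univ.filter fun q : Fin n × Fin n => q.1 < q.2 ∧ π q.2 < π q.1) := by
    ext ⟨x, y⟩
    simp only [mem_filter, mem_univ, true_and, mem_insert, Prod.mk.injEq]
    by_cases hba : x = b ∧ y = a
    · obtain ⟨rfl, rfl⟩ := hba
      simpa [hsa, hsb, a, b] using hπ
    by_cases hab : x = a ∧ y = b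
    · obtain ⟨rfl, rfl⟩ := hab
      simp only [hsa, hsb]
      simp [a, b, hπ.le]
    rw [s_apply_lt_s_apply_iff hi (by simpa [Fin.ext_iff, a, b] using hab)
      (by simpa [Fin.ext_iff, a, b, and_comm] using hba)]
    simp [hba]
  rw [len_mul_eq_card, s_inv, key, card_insert_of_notMem (by simp [a, b]), len]

theorem len_mul_s_of_descent {π : Perm (Fin n)} {i : ℕ} (h : Descent π i) :
    len (π * s n i) + 1 = len π := by
  simpa using (len_mul_s_of_ascent (ascent_mul_s_of_descent h)).symm

theorem len_mul_s_le (π : Perm (Fin n)) (i : ℕ) : len (π * s n i) ≤ len π + 1 := by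
  by_cases hi : i + 1 < n
  · by_cases h : Descent π i
    · have := len_mul_s_of_descent h; omega
    · rw [len_mul_s_of_ascent ((ascent_iff_not_descent hi).2 h)]
  · simp [s, hi]

theorem len_s {i : ℕ} (h : i + 1 < n) : len (s n i) = 1 := by
  simpa using len_mul_s_of_ascent (ascent_one h)

theorem card_filter_fst_lt_snd :
    (univ.filter fun p : Fin n × Fin n => p.1 < p.2).card = n.choose 2 := by
  rw [card_filter, ← univ_product_univ, sum_product_right]
  simp only [← card_filter]
  simp_rw [show ∀ y : Fin n, (univ.filter fun x : Fin n => x < y) = Iio y from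
    fun y => by ext; simp, Fin.card_Iio]
  rw [Fin.sum_univ_eq_sum_range (fun i => i) n, sum_range_id, Nat.choose_two_right]

theorem len_add_len_compl (π : Perm (Fin n)) : len π + len (compl π) = n.choose 2 := by
  rw [← card_filter_fst_lt_snd,
    ← card_filter_add_card_filter_not (p := fun p => π p.2 < π p.1), filter_filter,
    filter_filter, len, len]
  congr 2
  ext p
  simp only [mem_filter, mem_univ, true_and, compl_apply, Fin.rev_lt_rev, not_lt]
  exact and_congr_right fun h => ⟨le_of_lt, fun h' => h'.lt_of_ne (π.injective.ne h.ne)⟩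

theorem eq_one_or_exists_descent (π : Perm (Fin n)) : π = 1 ∨ ∃ i, Descent π i := by
  refine or_iff_not_imp_right.2 fun h => ?_
  simp only [not_exists] at h
  obtain _ | n := n
  · exact Subsingleton.elim _ _
  have hmono : StrictMono π := Fin.strictMono_iff_lt_succ.2 fun i =>
    ((ascent_iff_not_descent (Nat.succ_lt_succ i.isLt)).2 (h i)).2
  have := Subsingleton.elim (hmono.orderIsoOfSurjective π π.surjective) (OrderIso.refl _)
  exact Equiv.ext fun x => DFunLike.congr_fun this x

theorem len_mul_swap_lt {π : Perm (Fin n)} {a b : Fin n} (hab : a < b) (hπ : π b < π a) :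
    len (π * swap a b) < len π := by
  obtain ⟨d, hd⟩ : ∃ d, (b : ℕ) = a + d + 1 := ⟨b - a - 1, by omega⟩
  induction d generalizing π a with
  | zero =>
    have ha : (a : ℕ) + 1 < n := hd ▸ b.isLt
    obtain rfl : b = ⟨a + 1, ha⟩ := Fin.ext hd
    have := len_mul_s_of_descent ((descent_iff ha).2 hπ)
    rw [s_eq_swap ha, Fin.eta] at this
    omega
  | succ d ih =>
    have ha : (a : ℕ) + 1 < n := by omega
    let c : Fin n := ⟨a + 1, ha⟩
    have hsa : s n a a = c := by simpa only [Fin.eta] using s_apply_left ha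
    have hsc : s n a c = a := by simpa only [Fin.eta] using s_apply_right ha
    have hsb : s n a b = b := Fin.ext (by rw [val_s_apply ha]; split_ifs <;> omega)
    have hsplit : π * swap a b = π * s n a * swap c b * s n a := by
      rw [mul_assoc (π * s n a), swap_mul_s, hsc, hsb, ← mul_assoc, mul_s_mul_s]
    have hρ : len (π * s n a * swap c b) < len (π * s n a) :=
      ih (Fin.lt_def.2 (by simp [c]; omega)) (by simpa [hsb, hsc] using hπ) (by simp [c]; omega)
    rw [hsplit]
    rcases ascent_or_descent (π := π) ha with hasc | hdesc
    · have hY : Descent (π * s n a * swap c b) a := by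
        rw [descent_iff ha, Fin.eta]
        change (π * s n a * swap c b) c < (π * s n a * swap c b) a
        have hac : π a < π c := by simpa using (ascent_iff ha).1 hasc
        have hca : swap c b a = a :=
          swap_apply_of_ne_of_ne (by simp [c, Fin.ext_iff]) (Fin.ne_of_lt hab)
        simpa only [Perm.mul_apply, swap_apply_left, hca, hsb, hsa] using hπ.trans hac
      have := len_mul_s_of_descent hY
      have := len_mul_s_of_ascent hasc
      omega
    · have := len_mul_s_le (π * s n a * swap c b) a
      have := len_mul_s_of_descent hdesc
      omega

theorem not_between_of_len_mul_swap {w : Perm (Fin n)} {a b x : Fin n} (hax : a < x)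
    (hxb : x < b) (hlen : len (w * swap a b) + 1 = len w) : ¬(w b < w x ∧ w x < w a) := by
  rintro ⟨hbx, hxa⟩
  have hxba : swap x b a = a := swap_apply_of_ne_of_ne hax.ne (hax.trans hxb).ne
  have haxb : swap a x b = b := swap_apply_of_ne_of_ne (hax.trans hxb).ne' hxb.ne'
  have hsplit : swap a b = swap a x * swap x b * swap a x := by
    have := swap_apply_apply (swap a x) x b
    rwa [swap_apply_right, haxb, swap_inv] at this
  have h1 : len (w * swap a x) < len w := len_mul_swap_lt hax hxa
  have h2 : len (w * swap a x * swap x b) < len (w * swap a x) :=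
    len_mul_swap_lt hxb (by simpa [haxb] using hbx.trans hxa)
  have h3 : len (w * swap a x * swap x b * swap a x) < len (w * swap a x * swap x b) :=
    len_mul_swap_lt hax (by simpa [hxba, haxb] using hbx)
  rw [hsplit, ← mul_assoc, ← mul_assoc] at hlen
  omega

theorem descent_mul_swap_iff_left {w : Perm (Fin n)} {a b : Fin n} (hab : (a : ℕ) + 1 < b)
    (hw : w b < w a) (hlen : len (w * swap a b) + 1 = len w) :
    Descent (w * swap a b) a ↔ Descent w a := by
  have ha : (a : ℕ) + 1 < n := by omega
  let x : Fin n := ⟨a + 1, ha⟩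
  have hbetween := not_between_of_len_mul_swap (x := x) (Fin.lt_def.2 (by simp [x]))
    (Fin.lt_def.2 (by simp [x]; omega)) hlen
  rw [descent_iff ha, descent_iff ha, Fin.eta]
  change (w * swap a b) x < (w * swap a b) a ↔ w x < w a
  rw [Perm.mul_apply, Perm.mul_apply, swap_apply_left,
    swap_apply_of_ne_of_ne (by simp [x, Fin.ext_iff]) (by simp [x, Fin.ext_iff]; omega)]
  have hxb : w x ≠ w b := w.injective.ne (by simp [x, Fin.ext_iff]; omega)
  exact ⟨fun h => h.trans hw,
    fun h => (lt_or_gt_of_ne hxb).resolve_right fun h' => hbetween ⟨h', h⟩⟩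

theorem descent_mul_swap_iff_right {w : Perm (Fin n)} {a b : Fin n} (hab : (a : ℕ) + 1 < b)
    (hw : w b < w a) (hlen : len (w * swap a b) + 1 = len w) :
    Descent (w * swap a b) (b - 1) ↔ Descent w (b - 1) := by
  have hm : (b : ℕ) - 1 + 1 < n := by omega
  let y : Fin n := ⟨b - 1, by omega⟩
  have hbetween := not_between_of_len_mul_swap (x := y) (Fin.lt_def.2 (by simp [y]; omega))
    (Fin.lt_def.2 (by simp [y]; omega)) hlen
  have hb : (⟨b - 1 + 1, hm⟩ : Fin n) = b := Fin.ext (by simp; omega)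
  rw [descent_iff hm, descent_iff hm, hb]
  change (w * swap a b) b < (w * swap a b) y ↔ w b < w y
  rw [Perm.mul_apply, Perm.mul_apply, swap_apply_right,
    swap_apply_of_ne_of_ne (by simp [y, Fin.ext_iff]; omega) (by simp [y, Fin.ext_iff]; omega)]
  have hya : w y ≠ w a := w.injective.ne (by simp [y, Fin.ext_iff]; omega)
  exact ⟨fun h => hw.trans h,
    fun h => (lt_or_gt_of_ne hya).resolve_left fun h' => hbetween ⟨h, h'⟩⟩

theorem descent_iff_ascent_of_descent_iff_descent_compl {π σ : Perm (Fin n)} {m : ℕ}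
    (hm : m + 1 < n) (h : Descent σ m ↔ Descent (compl π) m) :
    Descent π m ↔ Ascent σ m := by
  rw [← ascent_compl_iff, ascent_iff_not_descent hm, ascent_iff_not_descent hm, h]

theorem len_mul_s_add_one_of_descent_iff {u w : Perm (Fin n)} {m : ℕ} (hm : m + 1 < n)
    (h : Descent w m ↔ Descent u m) (hlen : len w + 1 = len u) :
    len (w * s n m) + 1 = len (u * s n m) := by
  rcases ascent_or_descent (π := u) hm with hu | hu
  · have hw : Ascent w m := by rwa [ascent_iff_not_descent hm, h, ← ascent_iff_not_descent hm]
    rw [len_mul_s_of_ascent hu, len_mul_s_of_ascent hw, hlen]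
  · have := len_mul_s_of_descent hu
    have := len_mul_s_of_descent (h.2 hu)
    omega

section Admissible

variable {f : Triple n → ℤ} {u v w : Perm (Fin n)} {m : ℕ}

@[simp] theorem isSchubert_iff : IsSchubert (u, v, w) ↔ len u + len v + len w = n.choose 2 :=
  Iff.rfl

theorem isSchubert_of_mem_moveSet (hlen : len u + len v + len w + 1 = n.choose 2)
    (hu : Ascent u m) (hv : Ascent v m) (hw : Ascent w m) {P : Triple n}
    (hP : P ∈ MoveSet u v w m) : IsSchubert P := by
  rcases hP with rfl | rfl | rfl <;>
    simp only [isSchubert_iff, len_mul_s_of_ascent, hu, hv, hw] <;> omega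

theorem Admissible.apply_eq_of_mem_moveSet (hf : Admissible f)
    (hlen : len u + len v + len w + 1 = n.choose 2) (hu : Ascent u m) (hv : Ascent v m)
    (hw : Ascent w m) {P P' : Triple n} (hP : P ∈ MoveSet u v w m)
    (hP' : P' ∈ MoveSet u v w m) : f P = f P' :=
  hf.1 P P' (isSchubert_of_mem_moveSet hlen hu hv hw hP)
    (isSchubert_of_mem_moveSet hlen hu hv hw hP')
    (.single ⟨u, v, w, m, hlen, hu, hv, hw, hP, hP'⟩)

theorem Admissible.apply_eq_of_descent_fst (hf : Admissible f) (hS : IsSchubert (u, v, w))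
    (hu : Descent u m) (hv : Ascent v m) (hw : Ascent w m) :
    f (u, v, w) = f (u * s n m, v, w * s n m) := by
  have := len_mul_s_of_descent hu
  refine hf.apply_eq_of_mem_moveSet (u := u * s n m) ?_ (ascent_mul_s_of_descent hu) hv hw ?_ ?_
  · rw [isSchubert_iff] at hS; omega
  · simp [MoveSet]
  · simp [MoveSet]

theorem Admissible.apply_eq_of_descent_snd (hf : Admissible f) (hS : IsSchubert (u, v, w))
    (hu : Ascent u m) (hv : Descent v m) (hw : Ascent w m) :
    f (u, v, w) = f (u * s n m, v * s n m, w) := by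
  have := len_mul_s_of_descent hv
  refine hf.apply_eq_of_mem_moveSet (v := v * s n m) ?_ hu (ascent_mul_s_of_descent hv) hw ?_ ?_
  · rw [isSchubert_iff] at hS; omega
  · simp [MoveSet]
  · simp [MoveSet]

theorem Admissible.apply_eq_apply_mul_s (hf : Admissible f) (hS : IsSchubert (u, v, w))
    (hv : Ascent v m) (huw : Descent u m ↔ Ascent w m) :
    f (u, v, w) = f (u * s n m, v, w * s n m) := by
  by_cases hu : Descent u m
  · exact hf.apply_eq_of_descent_fst hS hu hv (huw.1 hu)
  · have hm := hv.1
    have hu' := (ascent_iff_not_descent hm).2 hu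
    have hw : Descent w m := (ascent_or_descent hm).resolve_left (hu ∘ huw.2)
    have hS' : IsSchubert (u * s n m, v, w * s n m) := by
      have := len_mul_s_of_descent hw
      rw [isSchubert_iff] at hS ⊢
      rw [len_mul_s_of_ascent hu']
      omega
    simpa using (hf.apply_eq_of_descent_fst hS' (descent_mul_s_of_ascent hu') hv
      (ascent_mul_s_of_descent hw)).symm

theorem Admissible.apply_one_compl (hf : Admissible f) (u : Perm (Fin n)) :
    f (u, 1, compl u) = 1 := by
  obtain rfl | ⟨m, hm⟩ := eq_one_or_exists_descent u
  · simpa [compl] using hf.2.2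
  have hS : IsSchubert (u, 1, compl u) := by
    simp [len_add_len_compl]
  rw [hf.apply_eq_apply_mul_s hS (ascent_one hm.1) ascent_compl_iff.symm, ← compl_mul]
  exact hf.apply_one_compl (u * s n m)
termination_by len u
decreasing_by have := len_mul_s_of_descent hm; omega

theorem isSchubert_of_len_add_one {π σ : Perm (Fin n)} {i : ℕ} (hi : i + 1 < n)
    (hlen : len σ + 1 = len (compl π)) : IsSchubert (π, s n i, σ) := by
  have := len_add_len_compl π
  rw [isSchubert_iff, len_s hi]
  omega

theorem compl_mul_swap_mul_s (π : Perm (Fin n)) (j k : Fin n) (m : ℕ) :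
    compl π * swap j k * s n m = compl (π * s n m) * swap (s n m j) (s n m k) := by
  rw [mul_assoc, swap_mul_s, ← mul_assoc, ← compl_mul]

theorem len_compl_mul_s_mul_swap {π : Perm (Fin n)} {j k : Fin n} (hm : m + 1 < n)
    (hstatus : Descent (compl π * swap j k) m ↔ Descent (compl π) m)
    (hlen : len (compl π * swap j k) + 1 = len (compl π)) :
    len (compl (π * s n m) * swap (s n m j) (s n m k)) + 1 = len (compl (π * s n m)) := by
  rw [← compl_mul_swap_mul_s, compl_mul]
  exact len_mul_s_add_one_of_descent_iff hm hstatus hlen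

theorem Admissible.apply_s_compl_mul_swap_eq (hf : Admissible f) {π : Perm (Fin n)}
    {j k : Fin n} {i : ℕ} (hi : i + 1 < n) (hm : m + 1 < n) (hmi : m ≠ i)
    (hstatus : Descent (compl π * swap j k) m ↔ Descent (compl π) m)
    (hlen : len (compl π * swap j k) + 1 = len (compl π)) :
    f (π, s n i, compl π * swap j k) =
      f (π * s n m, s n i, compl (π * s n m) * swap (s n m j) (s n m k)) := by
  rw [hf.apply_eq_apply_mul_s (isSchubert_of_len_add_one hi hlen) (ascent_s_of_ne hi hm hmi.symm)
    (descent_iff_ascent_of_descent_iff_descent_compl hm hstatus), compl_mul_swap_mul_s]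

theorem Admissible.apply_s_compl_mul_swap (hf : Admissible f) (d : ℕ) {π : Perm (Fin n)}
    {j k : Fin n} (hjk : (k : ℕ) = j + d + 1) (hdesc : compl π k < compl π j)
    (hlen : len (compl π * swap j k) + 1 = len (compl π)) {i : ℕ} (hji : (j : ℕ) ≤ i)
    (hik : i < k) : f (π, s n i, compl π * swap j k) = 1 := by
  induction d generalizing π j k i with
  | zero =>
    obtain rfl : i = j := by omega
    have hi : (j : ℕ) + 1 < n := by omega
    obtain rfl : k = ⟨j + 1, hi⟩ := Fin.ext hjk
    have hs : swap j ⟨j + 1, hi⟩ = s n j := by rw [s_eq_swap hi, Fin.eta]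
    have hdesc' : Descent (compl π) j := (descent_iff hi).2 (by rwa [Fin.eta])
    have hS := isSchubert_of_len_add_one hi hlen
    rw [hs] at hS ⊢
    rw [hf.apply_eq_of_descent_snd hS (descent_compl_iff.1 hdesc') (descent_s hi)
      (ascent_mul_s_of_descent hdesc'), s_mul_s, ← compl_mul]
    exact hf.apply_one_compl _
  | succ d ih =>
    have hi : i + 1 < n := by omega
    have shift : ∀ m, m + 1 < n → m ≠ i →
        (Descent (compl π * swap j k) m ↔ Descent (compl π) m) →
        (s n m k : ℕ) = s n m j + d + 1 → (s n m j : ℕ) ≤ i → i < s n m k →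
        f (π, s n i, compl π * swap j k) = 1 := fun m hm hmi hstatus hk hj hi' =>
      (hf.apply_s_compl_mul_swap_eq hi hm hmi hstatus hlen).trans <|
        ih hk (by simpa [compl_mul] using hdesc) (len_compl_mul_s_mul_swap hm hstatus hlen) hj hi'
    rcases Nat.lt_or_ge (j : ℕ) i with hji' | hij
    · have hm : (j : ℕ) + 1 < n := by omega
      refine shift j hm (by omega) (descent_mul_swap_iff_left (by omega) hdesc hlen) ?_ ?_ ?_ <;>
        · simp only [val_s_apply hm]; split_ifs <;> omega
    · have hm : (k : ℕ) - 1 + 1 < n := by omega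
      refine shift (k - 1) hm (by omega) (descent_mul_swap_iff_right (by omega) hdesc hlen)
        ?_ ?_ ?_ <;>
        · simp only [val_s_apply hm]; split_ifs <;> omega

end Admissible

end DC

theorem statement0_general {n : ℕ} (f : DC.Triple n → ℤ) (hf : DC.Admissible f)
    (π : Equiv.Perm (Fin n)) (j k : Fin n) (hjk : j < k)
    (hdesc : DC.compl π k < DC.compl π j)
    (σ : Equiv.Perm (Fin n)) (hσ : σ = DC.compl π * Equiv.swap j k)
    (hlen : DC.len σ + 1 = DC.len (DC.compl π))
    (i : ℕ) (hji : (j : ℕ) ≤ i) (hik : i < (k : ℕ)) :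
    f (π, DC.s n i, σ) = 1 := by
  subst hσ
  exact hf.apply_s_compl_mul_swap (k - j - 1) (by omega) hdesc hlen hji hik

/-- Monk's rule, straddling case: if σ is obtained from π̄ = w₀∘π by switching the
entries in positions j < k, decreasing the length by exactly one, and j ≤ i < k
(the swap straddles the gap between i and i+1), then f(π, s_i, σ) = 1 for any
admissible functional f. -/
theorem statement0 {n : ℕ} (hn : 2 ≤ n) (f : DC.Triple n → ℤ) (hf : DC.Admissible f)
    (π : Equiv.Perm (Fin n)) (j k : Fin n) (hjk : j < k)
    (hdesc : DC.compl π k < DC.compl π j)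
    (σ : Equiv.Perm (Fin n)) (hσ : σ = DC.compl π * Equiv.swap j k)
    (hlen : DC.len σ + 1 = DC.len (DC.compl π))
    (i : ℕ) (hji : (j : ℕ) ≤ i) (hik : i < (k : ℕ)) :
    f (π, DC.s n i, σ) = 1 :=
  statement0_general f hf π j k hjk hdesc σ hσ hlen i hji hik
end

section
/- Let n ≥ 1 and let f be an admissible functional on triples of permutations of {1,…,n}. Let π, σ be permutations of {1,…,n} with ℓ(π) + ℓ(σ) = n(n−1)/2 and σ ≠ π̄, where π̄ = w₀∘π is the complement of π. Then f(π, id, σ) = 0. -/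
namespace DCAux
open DC Finset

variable {n i : ℕ}

lemma swap_val (h : i + 1 < n) (x : Fin n) :
    (Equiv.swap (⟨i, Nat.lt_of_succ_lt h⟩ : Fin n) ⟨i + 1, h⟩ x).val =
      if x.val = i then i + 1 else if x.val = i + 1 then i else x.val := by
  rw [Equiv.swap_apply_def]
  simp only [Fin.ext_iff]
  split_ifs <;> simp_all

lemma s_eq (h : i + 1 < n) :
    s n i = Equiv.swap (⟨i, Nat.lt_of_succ_lt h⟩ : Fin n) ⟨i + 1, h⟩ := dif_pos h

lemma s_mul_self (n i : ℕ) : s n i * s n i = 1 := by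
  unfold s; split
  · exact Equiv.swap_mul_self _ _
  · simp

lemma mul_s_s (π : Equiv.Perm (Fin n)) : π * s n i * s n i = π := by
  rw [mul_assoc, s_mul_self, mul_one]

lemma mul_s_apply (h : i + 1 < n) (π : Equiv.Perm (Fin n)) (x : Fin n) :
    (π * s n i) x = π (Equiv.swap (⟨i, Nat.lt_of_succ_lt h⟩ : Fin n) ⟨i + 1, h⟩ x) := by
  rw [s_eq h]; rfl

lemma swap_lt_swap (h : i + 1 < n) {a b : Fin n} (hab : a < b)
    (hne : ¬(a.val = i ∧ b.val = i + 1)) :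
    Equiv.swap (⟨i, Nat.lt_of_succ_lt h⟩ : Fin n) ⟨i + 1, h⟩ a
      < Equiv.swap (⟨i, Nat.lt_of_succ_lt h⟩ : Fin n) ⟨i + 1, h⟩ b := by
  have ha := swap_val h a
  have hb := swap_val h b
  rw [Fin.lt_def] at hab ⊢
  have hbn := b.isLt
  split_ifs at ha hb <;> omega

/-- membership transport for the erased filters -/
lemma mem_aux (h : i + 1 < n) (π : Equiv.Perm (Fin n)) :
    ∀ p ∈ (Finset.univ.filter
        (fun p : Fin n × Fin n => p.1 < p.2 ∧ (π * s n i) p.2 < (π * s n i) p.1)).erase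
        (⟨i, Nat.lt_of_succ_lt h⟩, ⟨i + 1, h⟩),
      ((Equiv.swap (⟨i, Nat.lt_of_succ_lt h⟩ : Fin n) ⟨i + 1, h⟩ p.1),
        (Equiv.swap (⟨i, Nat.lt_of_succ_lt h⟩ : Fin n) ⟨i + 1, h⟩ p.2)) ∈
      (Finset.univ.filter
        (fun p : Fin n × Fin n => p.1 < p.2 ∧ π p.2 < π p.1)).erase
        (⟨i, Nat.lt_of_succ_lt h⟩, ⟨i + 1, h⟩) := by
  intro p hp
  rw [Finset.mem_erase, Finset.mem_filter] at hp ⊢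
  obtain ⟨hne, -, hlt, hinv⟩ := hp
  rw [mul_s_apply h, mul_s_apply h] at hinv
  have hne' : ¬(p.1.val = i ∧ p.2.val = i + 1) := by
    rintro ⟨h1, h2⟩
    exact hne (Prod.ext (Fin.ext h1) (Fin.ext h2))
  have hlt' := swap_lt_swap h hlt hne'
  refine ⟨?_, Finset.mem_univ _, hlt', hinv⟩
  intro hq
  have h1 : Equiv.swap (⟨i, Nat.lt_of_succ_lt h⟩ : Fin n) ⟨i + 1, h⟩ p.1
      = ⟨i, Nat.lt_of_succ_lt h⟩ := congrArg Prod.fst hq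
  have h2 : Equiv.swap (⟨i, Nat.lt_of_succ_lt h⟩ : Fin n) ⟨i + 1, h⟩ p.2
      = ⟨i + 1, h⟩ := congrArg Prod.snd hq
  have hp1 : p.1 = (⟨i + 1, h⟩ : Fin n) := by
    have := congrArg (Equiv.swap (⟨i, Nat.lt_of_succ_lt h⟩ : Fin n) ⟨i + 1, h⟩) h1
    rwa [Equiv.swap_apply_self, Equiv.swap_apply_left] at this
  have hp2 : p.2 = (⟨i, Nat.lt_of_succ_lt h⟩ : Fin n) := by
    have := congrArg (Equiv.swap (⟨i, Nat.lt_of_succ_lt h⟩ : Fin n) ⟨i + 1, h⟩) h2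
    rwa [Equiv.swap_apply_self, Equiv.swap_apply_right] at this
  rw [hp1, hp2, Fin.lt_def] at hlt
  simp at hlt

lemma card_erase_eq (h : i + 1 < n) (π : Equiv.Perm (Fin n)) :
    ((Finset.univ.filter
        (fun p : Fin n × Fin n => p.1 < p.2 ∧ (π * s n i) p.2 < (π * s n i) p.1)).erase
        (⟨i, Nat.lt_of_succ_lt h⟩, ⟨i + 1, h⟩)).card =
    ((Finset.univ.filter
        (fun p : Fin n × Fin n => p.1 < p.2 ∧ π p.2 < π p.1)).erase
        (⟨i, Nat.lt_of_succ_lt h⟩, ⟨i + 1, h⟩)).card := by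
  have h2 := mem_aux h (π * s n i)
  rw [mul_s_s] at h2
  refine Finset.card_bij' (fun p _ => (Equiv.swap _ _ p.1, Equiv.swap _ _ p.2))
    (fun p _ => (Equiv.swap _ _ p.1, Equiv.swap _ _ p.2)) (mem_aux h π) h2 ?_ ?_
  · intro p _; simp
  · intro p _; simp

lemma len_of_descent (h : i + 1 < n) {π : Equiv.Perm (Fin n)}
    (hd : π ⟨i + 1, h⟩ < π ⟨i, Nat.lt_of_succ_lt h⟩) :
    len π = len (π * s n i) + 1 := by
  set x0 : Fin n := ⟨i, Nat.lt_of_succ_lt h⟩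
  set x1 : Fin n := ⟨i + 1, h⟩
  have hx01 : x0 < x1 := by simp [x0, x1, Fin.lt_def]
  have hmem : (x0, x1) ∈ Finset.univ.filter
      (fun p : Fin n × Fin n => p.1 < p.2 ∧ π p.2 < π p.1) := by
    rw [Finset.mem_filter]; exact ⟨Finset.mem_univ _, hx01, hd⟩
  have hnmem : (x0, x1) ∉ Finset.univ.filter
      (fun p : Fin n × Fin n => p.1 < p.2 ∧ (π * s n i) p.2 < (π * s n i) p.1) := by
    rw [Finset.mem_filter]
    rintro ⟨-, -, hinv⟩
    rw [mul_s_apply h, mul_s_apply h, Equiv.swap_apply_right, Equiv.swap_apply_left] at hinv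
    exact absurd hd (not_lt.2 hinv.le)
  have := card_erase_eq h π
  rw [Finset.erase_eq_of_notMem hnmem] at this
  unfold len
  rw [← Finset.card_erase_add_one hmem, this]

lemma ascent_mul_s_of_descent (h : i + 1 < n) {π : Equiv.Perm (Fin n)}
    (hd : π ⟨i + 1, h⟩ < π ⟨i, Nat.lt_of_succ_lt h⟩) :
    (π * s n i) ⟨i, Nat.lt_of_succ_lt h⟩ < (π * s n i) ⟨i + 1, h⟩ := by
  rw [mul_s_apply h, mul_s_apply h, Equiv.swap_apply_right, Equiv.swap_apply_left]
  exact hd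

lemma len_of_ascent (h : i + 1 < n) {π : Equiv.Perm (Fin n)}
    (ha : π ⟨i, Nat.lt_of_succ_lt h⟩ < π ⟨i + 1, h⟩) :
    len (π * s n i) = len π + 1 := by
  have hd : (π * s n i) ⟨i + 1, h⟩ < (π * s n i) ⟨i, Nat.lt_of_succ_lt h⟩ := by
    rw [mul_s_apply h, mul_s_apply h, Equiv.swap_apply_right, Equiv.swap_apply_left]
    exact ha
  have := len_of_descent h hd
  rwa [mul_s_s] at this

lemma len_one : len (1 : Equiv.Perm (Fin n)) = 0 := by
  unfold len
  rw [Finset.card_eq_zero, Finset.filter_eq_empty_iff]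
  rintro p - ⟨h1, h2⟩
  exact absurd h1 (not_lt.2 h2.le)

lemma cardA (n : ℕ) :
    (Finset.univ.filter (fun p : Fin n × Fin n => p.1 < p.2)).card = n.choose 2 := by
  rw [Finset.card_eq_sum_card_fiberwise (f := Prod.snd) (t := Finset.univ) (fun x _ => Finset.mem_univ _)]
  have hb : ∀ b : Fin n,
      ((Finset.univ.filter (fun p : Fin n × Fin n => p.1 < p.2)).filter
        (fun p => p.snd = b)).card = b.val := by
    intro b
    rw [← Fin.card_Iio b]
    apply Finset.card_bij (fun p _ => p.1)
    · intro p hp; simp at hp ⊢; omega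
    · intro p hp q hq hpq
      simp at hp hq
      exact Prod.ext hpq (hp.2.trans hq.2.symm)
    · intro a ha
      simp at ha
      exact ⟨(a, b), by simp [ha], rfl⟩
  simp only [hb]
  rw [Fin.sum_univ_eq_sum_range (fun i => i) n, Finset.sum_range_id, Nat.choose_two_right]

lemma len_rev : len (Fin.revPerm : Equiv.Perm (Fin n)) = n.choose 2 := by
  unfold len
  rw [← cardA n]
  congr 1
  apply Finset.filter_congr
  intro p _
  simp [Fin.rev_lt_rev]

lemma eq_one_of_len_zero {π : Equiv.Perm (Fin n)} (h0 : len π = 0) : π = 1 := by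
  have hmono : StrictMono π := by
    intro a b hab
    by_contra hc
    push_neg at hc
    have hne : π b ≠ π a := fun e => absurd (π.injective e) (ne_of_gt hab)
    have hmem : (a, b) ∈ Finset.univ.filter
        (fun p : Fin n × Fin n => p.1 < p.2 ∧ π p.2 < π p.1) := by
      rw [Finset.mem_filter]
      exact ⟨Finset.mem_univ _, hab, lt_of_le_of_ne hc hne⟩
    unfold len at h0
    rw [Finset.card_eq_zero] at h0
    simp [h0] at hmem
  have hr : ⇑π = id := by
    apply (hmono.range_inj strictMono_id).1
    rw [Set.range_id, Equiv.range_eq_univ]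
  ext x
  have := congrFun hr x
  simp only [id_eq] at this
  simp [this]

lemma eq_rev_of_all_descent {σ : Equiv.Perm (Fin n)}
    (hd : ∀ j, (hj : j + 1 < n) → σ ⟨j + 1, hj⟩ < σ ⟨j, Nat.lt_of_succ_lt hj⟩) :
    σ = Fin.revPerm := by
  have hanti : StrictAnti σ := by
    cases n with
    | zero => intro a; exact absurd a.isLt (by omega)
    | succ m =>
      rw [Fin.strictAnti_iff_succ_lt]
      intro j
      have := hd j.val (by omega)
      exact this
  have hrevanti : StrictAnti (Fin.rev : Fin n → Fin n) := fun a b hab => Fin.rev_lt_rev.2 hab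
  have hmono : StrictMono (⇑σ ∘ Fin.rev) := hanti.comp hrevanti
  have hr : ⇑σ ∘ Fin.rev = id := by
    apply (hmono.range_inj strictMono_id).1
    rw [Set.range_id, Set.range_comp, Fin.rev_surjective.range_eq, Set.image_univ,
      Equiv.range_eq_univ]
  ext x
  have := congrFun hr x.rev
  simp only [Function.comp_apply, Fin.rev_rev, id_eq] at this
  simp [this]

end DCAux



/-- For any admissible functional f: if ℓ(π) + ℓ(σ) = n(n−1)/2 and σ ≠ π̄ = w₀∘π,
then f(π, id, σ) = 0. -/
theorem statement3 {n : ℕ} (hn : 1 ≤ n) (f : DC.Triple n → ℤ) (hf : DC.Admissible f)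
    (π σ : Equiv.Perm (Fin n))
    (hlen : DC.len π + DC.len σ = n.choose 2)
    (hne : σ ≠ DC.compl π) :
    f (π, 1, σ) = 0 := by
  suffices H : ∀ k (π σ : Equiv.Perm (Fin n)), DC.len π = k →
      DC.len π + DC.len σ = n.choose 2 → σ ≠ DC.compl π → f (π, 1, σ) = 0 by
    exact H _ π σ rfl hlen hne
  intro k
  induction k using Nat.strong_induction_on with
  | _ k ih =>
  intro π σ hk hlen hne
  by_cases htriv : ∃ i, DC.Ascent π i ∧ DC.Ascent σ i
  · obtain ⟨i, hπ, hσ⟩ := htriv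
    apply hf.2.1
    obtain ⟨h, hπlt⟩ := hπ
    refine ⟨?_, i, ⟨h, hπlt⟩, ⟨h, by simp [Fin.lt_def]⟩, hσ⟩
    show DC.len π + DC.len 1 + DC.len σ = n.choose 2
    rw [DCAux.len_one]; omega
  · push_neg at htriv
    by_cases hasc : ∃ i, DC.Ascent σ i
    · obtain ⟨i, hσa⟩ := hasc
      obtain ⟨h, hσlt⟩ := hσa
      have hπne : π ⟨i, Nat.lt_of_succ_lt h⟩ ≠ π ⟨i + 1, h⟩ := fun e => by
        simpa [Fin.ext_iff] using π.injective e
      have hπd : π ⟨i + 1, h⟩ < π ⟨i, Nat.lt_of_succ_lt h⟩ := by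
        rcases lt_or_gt_of_ne hπne with h' | h'
        · exact absurd ⟨h, hσlt⟩ (htriv i ⟨h, h'⟩)
        · exact h'
      have hlπ : DC.len π = DC.len (π * DC.s n i) + 1 := DCAux.len_of_descent h hπd
      have hlσ : DC.len (σ * DC.s n i) = DC.len σ + 1 := DCAux.len_of_ascent h hσlt
      have hS1 : DC.IsSchubert ((π, 1, σ) : DC.Triple n) := by
        show DC.len π + DC.len 1 + DC.len σ = n.choose 2
        rw [DCAux.len_one]; omega
      have hS2 : DC.IsSchubert ((π * DC.s n i, 1, σ * DC.s n i) : DC.Triple n) := by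
        show DC.len (π * DC.s n i) + DC.len (1 : Equiv.Perm (Fin n))
          + DC.len (σ * DC.s n i) = n.choose 2
        rw [DCAux.len_one]; omega
      have hmove : DC.DCMove (π, 1, σ) (π * DC.s n i, 1, σ * DC.s n i) := by
        refine ⟨π * DC.s n i, 1, σ, i, ?_, ⟨h, DCAux.ascent_mul_s_of_descent h hπd⟩,
          ⟨h, by simp [Fin.lt_def]⟩, ⟨h, hσlt⟩, ?_, ?_⟩
        · rw [DCAux.len_one]; omega
        · simp only [DC.MoveSet, Set.mem_insert_iff, Set.mem_singleton_iff]
          left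
          rw [DCAux.mul_s_s]
        · simp only [DC.MoveSet, Set.mem_insert_iff, Set.mem_singleton_iff]
          right; right; trivial
      have heq := hf.1 _ _ hS1 hS2 (Relation.ReflTransGen.single hmove)
      rw [heq]
      refine ih (DC.len (π * DC.s n i)) (by omega) _ _ rfl (by omega) ?_
      intro hc
      apply hne
      have hc' : σ * DC.s n i = DC.compl π * DC.s n i := by
        rw [hc]; unfold DC.compl; rw [mul_assoc]
      exact mul_right_cancel hc'
    · push_neg at hasc
      have hdall : ∀ j, (hj : j + 1 < n) → σ ⟨j + 1, hj⟩ < σ ⟨j, Nat.lt_of_succ_lt hj⟩ := by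
        intro j hj
        have hσne : σ ⟨j, Nat.lt_of_succ_lt hj⟩ ≠ σ ⟨j + 1, hj⟩ := fun e => by
          simpa [Fin.ext_iff] using σ.injective e
        rcases lt_or_gt_of_ne hσne with h' | h'
        · exact absurd ⟨hj, h'⟩ (hasc j)
        · exact h'
      have hσw : σ = DC.w0 n := DCAux.eq_rev_of_all_descent hdall
      have hlw : DC.len σ = n.choose 2 := by rw [hσw]; exact DCAux.len_rev
      have hπ0 : DC.len π = 0 := by omega
      have hπ1 : π = 1 := DCAux.eq_one_of_len_zero hπ0
      exact absurd (by rw [hπ1, hσw]; simp [DC.compl]) hne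
end

section
/- The triple (214365, 154326, 321654) of permutations of {1,…,6} (in one-line notation) is a Schubert problem for S_6 such that for every position i ∈ {1,…,5}, exactly two of the three permutations have a descent at i; consequently no descent-cycling move applies to it, and the only Schubert problem dc-equivalent to it is itself. -/
/-- The permutation 214365 (one-line notation, 0-indexed values). -/
noncomputable def u14 : Equiv.Perm (Fin 6) := Equiv.ofBijective ![1, 0, 3, 2, 5, 4] (by decide)
/-- The permutation 154326 (one-line notation, 0-indexed values). -/
noncomputable def v14 : Equiv.Perm (Fin 6) := Equiv.ofBijective ![0, 4, 3, 2, 1, 5] (by decide)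
/-- The permutation 321654 (one-line notation, 0-indexed values). -/
noncomputable def w14 : Equiv.Perm (Fin 6) := Equiv.ofBijective ![2, 1, 0, 5, 4, 3] (by decide)

lemma noThreeAsc : ∀ i : ℕ, i + 1 < 6 →
    ¬ (DC.Ascent v14 i ∧ DC.Ascent w14 i) ∧
    ¬ (DC.Ascent u14 i ∧ DC.Ascent w14 i) ∧
    ¬ (DC.Ascent u14 i ∧ DC.Ascent v14 i) := by
  intro i hi
  have hi5 : i < 5 := by omega
  unfold DC.Ascent
  interval_cases i <;> exact ⟨by decide, by decide, by decide⟩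

lemma noMove14 : ∀ Q : DC.Triple 6, ¬ DC.DCMove (u14, v14, w14) Q := by
  rintro Q ⟨u, v, w, i, hlen, hu, hv, hw, hP, hQ⟩
  obtain ⟨h6, -⟩ := id hu
  obtain ⟨hvw, huw, huv⟩ := noThreeAsc i h6
  simp only [DC.MoveSet, Set.mem_insert_iff, Set.mem_singleton_iff, Prod.mk.injEq] at hP
  rcases hP with ⟨-, rfl, rfl⟩ | ⟨rfl, -, rfl⟩ | ⟨rfl, rfl, -⟩
  · exact hvw ⟨hv, hw⟩
  · exact huw ⟨hu, hw⟩
  · exact huv ⟨hu, hv⟩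

/-- (214365, 154326, 321654) is a Schubert problem for S_6 in which, at every
position, exactly two of the three permutations have a descent; consequently no
descent-cycling move applies to it and the only Schubert problem dc-equivalent to
it is itself. -/
theorem statement14 :
    DC.IsSchubert (u14, v14, w14) ∧
    (∀ i : ℕ, i + 1 < 6 →
      ((DC.Descent u14 i ∧ DC.Descent v14 i ∧ ¬ DC.Descent w14 i) ∨
       (DC.Descent u14 i ∧ ¬ DC.Descent v14 i ∧ DC.Descent w14 i) ∨
       (¬ DC.Descent u14 i ∧ DC.Descent v14 i ∧ DC.Descent w14 i))) ∧
    (∀ Q : DC.Triple 6, ¬ DC.DCMove (u14, v14, w14) Q) ∧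
    (∀ Q : DC.Triple 6, DC.DCEquiv (u14, v14, w14) Q → Q = (u14, v14, w14)) := by
  refine ⟨?_, ?_, noMove14, ?_⟩
  · show DC.len u14 + DC.len v14 + DC.len w14 = Nat.choose 6 2
    unfold DC.len
    decide
  · intro i hi
    have hi5 : i < 5 := by omega
    interval_cases i <;>
      · unfold DC.Descent
        decide
  · intro Q h
    rcases h.cases_head with h | ⟨c, hc, -⟩
    · exact h.symm
    · exact absurd hc (noMove14 c)
end
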